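/- arXiv:2303.11081 — 2 statements merged into one kernel-verified Lean document; each statement's English description precedes it below -/
import Mathlib

section
/- One-step contraction of randomized block fixed-point iteration: let f : ℝ^d → ℝ^d be a γ-contraction (γ ∈ [0,1)) with fixed point x*. Partition the d coordinates into n blocks, and at each step choose a block uniformly at random and set x^{k+1} = (I − αM^k)x^k + αM^k f(x^k), where M^k is the diagonal projection onto the chosen block and α ∈ (0,1]. Then E[‖x^{k+1} − x*‖² | x^k] ≤ (1 − (α/n)(1 − γ²)) ‖x^k − x*‖². -/
/-! Each coordinate lies in exactly one block, so summing the squared error over the `n` possible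
updates counts the untouched error `‖x - x*‖²` `n - 1` times and the fully updated error
`‖(1 - α)(x - x*) + α(f x - x*)‖²` once. By convexity of `‖·‖²` and `‖f x - x*‖ ≤ γ‖x - x*‖`,
the latter is at most `(1 - α(1 - γ²))‖x - x*‖²`. -/

theorem norm_sq_smul_add_smul_le {E : Type*} [SeminormedAddCommGroup E] [NormedSpace ℝ E]
    {α : ℝ} (hα0 : 0 ≤ α) (hα1 : α ≤ 1) (a b : E) :
    ‖(1 - α) • a + α • b‖ ^ 2 ≤ (1 - α) * ‖a‖ ^ 2 + α * ‖b‖ ^ 2 :=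
  (convexOn_univ_norm.pow (fun _ _ ↦ norm_nonneg _) 2).2 trivial trivial (by linarith) hα0
    (by ring)

theorem norm_sq_smul_add_smul_le_of_norm_le_mul {E : Type*} [SeminormedAddCommGroup E]
    [NormedSpace ℝ E] {α γ : ℝ} (hα0 : 0 ≤ α) (hα1 : α ≤ 1) {a b : E}
    (hb : ‖b‖ ≤ γ * ‖a‖) :
    ‖(1 - α) • a + α • b‖ ^ 2 ≤ (1 - α * (1 - γ ^ 2)) * ‖a‖ ^ 2 := by
  have hb2 : ‖b‖ ^ 2 ≤ (γ * ‖a‖) ^ 2 := pow_le_pow_left₀ (norm_nonneg b) hb 2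
  calc ‖(1 - α) • a + α • b‖ ^ 2 ≤ (1 - α) * ‖a‖ ^ 2 + α * ‖b‖ ^ 2 :=
        norm_sq_smul_add_smul_le hα0 hα1 a b
    _ ≤ (1 - α) * ‖a‖ ^ 2 + α * (γ * ‖a‖) ^ 2 := by gcongr
    _ = (1 - α * (1 - γ ^ 2)) * ‖a‖ ^ 2 := by ring

theorem sum_norm_sq_blockwise_update {ι κ : Type*} [Fintype ι] [Fintype κ] [DecidableEq κ]
    (blk : ι → κ) (a b : EuclideanSpace ℝ ι) :
    ∑ j, ‖(WithLp.toLp 2 (fun i ↦ if blk i = j then b i else a i) : EuclideanSpace ℝ ι)‖ ^ 2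
      = Fintype.card κ * ‖a‖ ^ 2 + (‖b‖ ^ 2 - ‖a‖ ^ 2) := by
  have hcoord (i : ι) (j : κ) : (if blk i = j then b i else a i) ^ 2
      = a i ^ 2 + if blk i = j then b i ^ 2 - a i ^ 2 else 0 := by
    split_ifs <;> ring
  simp only [EuclideanSpace.norm_sq_eq, Real.norm_eq_abs, sq_abs, hcoord]
  rw [Finset.sum_comm]
  simp only [Finset.sum_add_distrib, Finset.sum_ite_eq, Finset.mem_univ, if_true,
    Finset.sum_const, Finset.card_univ, nsmul_eq_mul, Finset.mul_sum, Finset.sum_sub_distrib]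

theorem block_fixed_point_one_step_general (d n : ℕ)
    (γ α : ℝ) (hα0 : 0 < α) (hα1 : α ≤ 1)
    (f : EuclideanSpace ℝ (Fin d) → EuclideanSpace ℝ (Fin d))
    (hf : ∀ x y, ‖f x - f y‖ ≤ γ * ‖x - y‖)
    (xstar : EuclideanSpace ℝ (Fin d)) (hfix : f xstar = xstar)
    (blk : Fin d → Fin n)
    (x : EuclideanSpace ℝ (Fin d)) :
    (n : ℝ)⁻¹ * ∑ j : Fin n,
        ‖(show EuclideanSpace ℝ (Fin d) from
            WithLp.toLp 2 (fun i => if blk i = j then (1 - α) * x i + α * f x i else x i))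
            - xstar‖ ^ 2
      ≤ (1 - α / n * (1 - γ ^ 2)) * ‖x - xstar‖ ^ 2 := by
  set a := x - xstar
  set w := (1 - α) • a + α • (f x - xstar)
  have hcentred (j : Fin n) :
      (show EuclideanSpace ℝ (Fin d) from
        WithLp.toLp 2 (fun i => if blk i = j then (1 - α) * x i + α * f x i else x i)) - xstar
        = WithLp.toLp 2 (fun i ↦ if blk i = j then w i else a i) := by
    ext i
    simp only [w, a, PiLp.sub_apply, PiLp.add_apply, PiLp.smul_apply, smul_eq_mul]
    split_ifs <;> ring
  have hw : ‖w‖ ^ 2 ≤ (1 - α * (1 - γ ^ 2)) * ‖a‖ ^ 2 :=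
    norm_sq_smul_add_smul_le_of_norm_le_mul hα0.le hα1 (by simpa [hfix] using hf x xstar)
  rw [Finset.sum_congr rfl fun j _ ↦ congrArg (‖·‖ ^ 2) (hcentred j),
    sum_norm_sq_blockwise_update, Fintype.card_fin]
  calc (n : ℝ)⁻¹ * (n * ‖a‖ ^ 2 + (‖w‖ ^ 2 - ‖a‖ ^ 2))
      = (n : ℝ)⁻¹ * n * ‖a‖ ^ 2 + (n : ℝ)⁻¹ * (‖w‖ ^ 2 - ‖a‖ ^ 2) := by ring
    _ ≤ 1 * ‖a‖ ^ 2 + (n : ℝ)⁻¹ * (-(α * (1 - γ ^ 2)) * ‖a‖ ^ 2) := by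
        gcongr
        · exact inv_mul_le_one
        · linarith
    _ = (1 - α / n * (1 - γ ^ 2)) * ‖a‖ ^ 2 := by ring

/-- One-step contraction of the randomized block fixed-point iteration:
if `f` is a `γ`-contraction with fixed point `x*`, the coordinates `Fin d`
are partitioned into `n` nonempty blocks via the (surjective) block map `blk`,
and one block chosen uniformly at random is updated by a convex combination
with weight `α`, then the conditional expected squared distance to `x*`
contracts by the factor `1 − (α/n)(1 − γ²)`. -/
theorem block_fixed_point_one_step (d n : ℕ) (hn : 0 < n)
    (γ α : ℝ) (hγ0 : 0 ≤ γ) (hγ1 : γ < 1) (hα0 : 0 < α) (hα1 : α ≤ 1)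
    (f : EuclideanSpace ℝ (Fin d) → EuclideanSpace ℝ (Fin d))
    (hf : ∀ x y, ‖f x - f y‖ ≤ γ * ‖x - y‖)
    (xstar : EuclideanSpace ℝ (Fin d)) (hfix : f xstar = xstar)
    (blk : Fin d → Fin n) (hblk : Function.Surjective blk)
    (x : EuclideanSpace ℝ (Fin d)) :
    (n : ℝ)⁻¹ * ∑ j : Fin n,
        ‖(show EuclideanSpace ℝ (Fin d) from
            WithLp.toLp 2 (fun i => if blk i = j then (1 - α) * x i + α * f x i else x i))
            - xstar‖ ^ 2
      ≤ (1 - α / n * (1 - γ ^ 2)) * ‖x - xstar‖ ^ 2 :=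
  block_fixed_point_one_step_general d n γ α hα0 hα1 f hf xstar hfix blk x
end

section
/- Averaged gradient norm bound for biased SGD: let f : ℝ^n → ℝ be continuously differentiable with γ-Lipschitz gradient, bounded below by f*, and run x^{k+1} = x^k − η d(x^k) for N steps with 0 < ηγ < 1. If E[‖Δ^k‖²] ≤ G₀ and |E[⟨∇f(x^k), Δ^k⟩]| ≤ ηG₀ + ρ^{k−1}G₀ for all k with some ρ ∈ (0,1), then (1/N) ∑_{k=1}^N E[‖∇f(x^k)‖²] ≤ (f(x^1) − f*)/(Nη(1 − ηγ/2)) + ηG₀ + G₀/((1−ρ)N) + ηγG₀/(2 − ηγ). -/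
/-!
By the descent lemma for a function with `γ`-Lipschitz gradient, one inexact step `x ↦ x - η d`
decreases `f` by at least `η (1 - ηγ/2) ‖∇f x‖²`, up to the cross term `-η (1 - ηγ) ⟪∇f x, Δ⟫`
and the noise term `γη²/2 ‖Δ‖²`. Taking expectations, dividing by `η (1 - ηγ/2)` and inserting
the bias and variance bounds gives a bound on each `E ‖∇f(xᵏ)‖²`. Summing over `k`, the values
of `f` telescope to `f x¹ - E f(x^{N+1}) ≤ f x¹ - f*`, and the decaying part `ρ^{k-1} G₀` of the
bias sums to at most `G₀ / (1 - ρ)`.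
-/

open MeasureTheory Finset

section Descent

variable {E : Type*} [NormedAddCommGroup E] [NormedSpace ℝ E] {f : E → ℝ} {γ : ℝ}

theorem image_le_add_fderiv_add_sq_of_lipschitz {f' : E → E →L[ℝ] ℝ}
    (hf : ∀ z, HasFDerivAt f (f' z) z) (hlip : ∀ z w, ‖f' z - f' w‖ ≤ γ * ‖z - w‖) (x y : E) :
    f y ≤ f x + f' x (y - x) + γ / 2 * ‖y - x‖ ^ 2 := by
  set v := y - x
  -- `f` along the segment minus its quadratic model: its derivative is `≤ 0` for `t ≥ 0`.
  let φ : ℝ → ℝ := fun t => f (x + t • v) - t * f' x v - γ / 2 * ‖v‖ ^ 2 * t ^ 2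
  have hφ : ∀ t, HasDerivAt φ (f' (x + t • v) v - f' x v - γ * ‖v‖ ^ 2 * t) t := by
    intro t
    have hline : HasDerivAt (fun t : ℝ => x + t • v) v t := by
      simpa using ((hasDerivAt_id t).smul_const v).const_add x
    have h := ((hf _).comp_hasDerivAt t hline).sub ((hasDerivAt_id t).mul_const (f' x v))
      |>.sub ((hasDerivAt_pow 2 t).const_mul (γ / 2 * ‖v‖ ^ 2))
    exact h.congr_deriv (by simp only [Nat.cast_ofNat]; ring)
  have hφ' : ∀ t ∈ interior (Set.Ici (0 : ℝ)),
      f' (x + t • v) v - f' x v - γ * ‖v‖ ^ 2 * t ≤ 0 := by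
    rw [interior_Ici]
    intro t (ht : 0 < t)
    have := calc f' (x + t • v) v - f' x v = (f' (x + t • v) - f' x) v := rfl
      _ ≤ ‖f' (x + t • v) - f' x‖ * ‖v‖ :=
        (le_abs_self _).trans ((f' (x + t • v) - f' x).le_opNorm v)
      _ ≤ γ * ‖x + t • v - x‖ * ‖v‖ := by gcongr; exact hlip _ _
      _ = γ * ‖v‖ ^ 2 * t := by
        rw [add_sub_cancel_left, norm_smul, Real.norm_of_nonneg ht.le]; ring
    linarith
  have := antitoneOn_of_hasDerivWithinAt_nonpos (convex_Ici 0)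
    (fun t _ => (hφ t).continuousAt.continuousWithinAt) (fun t _ => (hφ t).hasDerivWithinAt) hφ'
    Set.self_mem_Ici (Set.mem_Ici.2 zero_le_one) zero_le_one
  simp only [φ, v, one_smul, zero_smul, add_zero, add_sub_cancel] at this
  linarith

end Descent

section Gradient

variable {E : Type*} [NormedAddCommGroup E] [InnerProductSpace ℝ E] [CompleteSpace E]
  {f : E → ℝ} {f' : E → E} {γ : ℝ}

theorem image_le_add_inner_add_sq_of_lipschitz_gradient (hf : ∀ z, HasGradientAt f (f' z) z)
    (hlip : ∀ z w, ‖f' z - f' w‖ ≤ γ * ‖z - w‖) (x y : E) :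
    f y ≤ f x + inner ℝ (f' x) (y - x) + γ / 2 * ‖y - x‖ ^ 2 :=
  image_le_add_fderiv_add_sq_of_lipschitz (fun z => (hf z).hasFDerivAt)
    (fun z w => by simpa only [← map_sub, LinearIsometryEquiv.norm_map] using hlip z w) x y

theorem sq_norm_gradient_le_of_step (hf : ∀ z, HasGradientAt f (f' z) z)
    (hlip : ∀ z w, ‖f' z - f' w‖ ≤ γ * ‖z - w‖) (η : ℝ) (x d : E) :
    η * (1 - η * γ / 2) * ‖f' x‖ ^ 2 ≤ f x - f (x - η • d)
      - η * (1 - η * γ) * inner ℝ (f' x) (d - f' x) + γ * η ^ 2 / 2 * ‖d - f' x‖ ^ 2 := by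
  have hdesc := image_le_add_inner_add_sq_of_lipschitz_gradient hf hlip x (x - η • d)
  have hinner : inner ℝ (f' x) d = ‖f' x‖ ^ 2 + inner ℝ (f' x) (d - f' x) := by
    rw [inner_sub_right, real_inner_self_eq_norm_sq]; ring
  have hnorm : ‖d‖ ^ 2 = ‖f' x‖ ^ 2 + 2 * inner ℝ (f' x) (d - f' x) + ‖d - f' x‖ ^ 2 := by
    rw [← norm_add_sq_real, add_sub_cancel]
  rw [sub_sub_cancel_left, inner_neg_right, real_inner_smul_right, norm_neg, norm_smul,
    Real.norm_eq_abs, mul_pow, sq_abs, hinner, hnorm] at hdesc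
  linarith

variable {η : ℝ} {Ω : Type*} [MeasurableSpace Ω] {μ : Measure Ω} {X Y D : Ω → E}

theorem integral_sq_norm_gradient_le_of_step (hf : ∀ z, HasGradientAt f (f' z) z)
    (hlip : ∀ z w, ‖f' z - f' w‖ ≤ γ * ‖z - w‖) (hγ : 0 ≤ γ) (hη : 0 < η) (hηγ : η * γ ≤ 1)
    (hY : ∀ ω, Y ω = X ω - η • D ω)
    (hfX : Integrable (fun ω => f (X ω)) μ) (hfY : Integrable (fun ω => f (Y ω)) μ)
    (hgrad : Integrable (fun ω => ‖f' (X ω)‖ ^ 2) μ)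
    (hinner : Integrable (fun ω => inner ℝ (f' (X ω)) (D ω - f' (X ω))) μ)
    (herr : Integrable (fun ω => ‖D ω - f' (X ω)‖ ^ 2) μ) :
    ∫ ω, ‖f' (X ω)‖ ^ 2 ∂μ
      ≤ (∫ ω, f (X ω) ∂μ - ∫ ω, f (Y ω) ∂μ) / (η * (1 - η * γ / 2))
        + |∫ ω, inner ℝ (f' (X ω)) (D ω - f' (X ω)) ∂μ|
        + η * γ / (2 - η * γ) * ∫ ω, ‖D ω - f' (X ω)‖ ^ 2 ∂μ := by
  set c := η * (1 - η * γ / 2) with hc_def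
  set I := ∫ ω, inner ℝ (f' (X ω)) (D ω - f' (X ω)) ∂μ
  have hc : 0 < c := mul_pos hη (by linarith)
  have hmono : c * ∫ ω, ‖f' (X ω)‖ ^ 2 ∂μ ≤ ∫ ω, f (X ω) ∂μ - ∫ ω, f (Y ω) ∂μ
      - η * (1 - η * γ) * I + γ * η ^ 2 / 2 * ∫ ω, ‖D ω - f' (X ω)‖ ^ 2 ∂μ := by
    have hΔf : Integrable (fun ω => f (X ω) - f (Y ω)) μ := hfX.sub hfY
    have hcross : Integrable (fun ω => f (X ω) - f (Y ω)
        - η * (1 - η * γ) * inner ℝ (f' (X ω)) (D ω - f' (X ω))) μ :=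
      hΔf.sub (hinner.const_mul _)
    have h : ∫ ω, c * ‖f' (X ω)‖ ^ 2 ∂μ ≤ ∫ ω, (f (X ω) - f (Y ω)
        - η * (1 - η * γ) * inner ℝ (f' (X ω)) (D ω - f' (X ω))
        + γ * η ^ 2 / 2 * ‖D ω - f' (X ω)‖ ^ 2) ∂μ :=
      integral_mono (hgrad.const_mul c) (hcross.add (herr.const_mul _))
        fun ω => by rw [hY]; exact sq_norm_gradient_le_of_step hf hlip η (X ω) (D ω)
    rwa [integral_add hcross (herr.const_mul _), integral_sub hΔf (hinner.const_mul _),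
      integral_sub hfX hfY, integral_const_mul, integral_const_mul, integral_const_mul] at h
  have hbias : -(η * (1 - η * γ) * I) ≤ c * |I| :=
    calc -(η * (1 - η * γ) * I) = η * (1 - η * γ) * -I := by ring
      _ ≤ η * (1 - η * γ) * |I| :=
        mul_le_mul_of_nonneg_left (neg_le_abs I) (mul_nonneg hη.le (by linarith))
      _ ≤ c * |I| :=
        mul_le_mul_of_nonneg_right (by nlinarith [mul_nonneg hη.le hγ]) (abs_nonneg I)
  have herr : γ * η ^ 2 / 2 * ∫ ω, ‖D ω - f' (X ω)‖ ^ 2 ∂μ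
      = c * (η * γ / (2 - η * γ) * ∫ ω, ‖D ω - f' (X ω)‖ ^ 2 ∂μ) := by
    have : 2 - γ * η ≠ 0 := by linarith
    rw [hc_def]
    field_simp
  refine le_of_mul_le_mul_left ?_ hc
  rw [mul_add, mul_add, mul_div_cancel₀ _ hc.ne']
  linarith

end Gradient

theorem sum_Icc_pow_sub_one_le {K : Type*} [Field K] [LinearOrder K] [IsStrictOrderedRing K]
    {ρ : K} (hρ0 : 0 ≤ ρ) (hρ1 : ρ < 1) (N : ℕ) :
    ∑ k ∈ Icc 1 N, ρ ^ (k - 1) ≤ 1 / (1 - ρ) := by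
  rw [← Ico_add_one_right_eq_Icc, sum_Ico_eq_sum_range]
  simpa only [Nat.add_sub_cancel_left, pow_zero, range_eq_Ico]
    using geom_sum_Ico_le_of_lt_one (m := 0) (n := N + 1 - 1) hρ0 hρ1

theorem sum_Icc_sub' {M : Type*} [AddCommGroup M] (F : ℕ → M) {N : ℕ} (hN : 1 ≤ N) :
    ∑ k ∈ Icc 1 N, (F k - F (k + 1)) = F 1 - F (N + 1) := by
  rw [← neg_sub, ← sum_Icc_sub hN, ← sum_neg_distrib]
  simp only [neg_sub]

theorem average_le_of_le_telescoping_add_geom {a F : ℕ → ℝ} {N : ℕ} {c C G ρ T : ℝ}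
    (hN : 1 ≤ N) (hc : 0 < c) (hG : 0 ≤ G) (hρ0 : 0 ≤ ρ) (hρ1 : ρ < 1)
    (hT : F 1 - F (N + 1) ≤ T)
    (h : ∀ k ∈ Icc 1 N, a k ≤ (F k - F (k + 1)) / c + C + ρ ^ (k - 1) * G) :
    1 / (N : ℝ) * ∑ k ∈ Icc 1 N, a k ≤ T / (N * c) + C + G / ((1 - ρ) * N) := by
  have hN' : (0 : ℝ) < N := by exact_mod_cast hN
  have hρ : 0 < 1 - ρ := sub_pos.2 hρ1
  calc 1 / (N : ℝ) * ∑ k ∈ Icc 1 N, a k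
      ≤ 1 / N * ∑ k ∈ Icc 1 N, ((F k - F (k + 1)) / c + C + ρ ^ (k - 1) * G) := by
        gcongr with k hk; exact h k hk
    _ = 1 / N * ((F 1 - F (N + 1)) / c + N * C + (∑ k ∈ Icc 1 N, ρ ^ (k - 1)) * G) := by
        rw [sum_add_distrib, sum_add_distrib, ← sum_div, sum_Icc_sub' F hN, sum_const,
          Nat.card_Icc, ← sum_mul, nsmul_eq_mul, Nat.add_sub_cancel]
    _ ≤ 1 / N * (T / c + N * C + 1 / (1 - ρ) * G) := by
        gcongr
        exact sum_Icc_pow_sub_one_le hρ0 hρ1 N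
    _ = T / (N * c) + C + G / ((1 - ρ) * N) := by
        field_simp

/-- Averaged gradient norm bound for biased SGD: under a `γ`-Lipschitz
gradient, a lower bound `f*`, the update `x^{k+1} = x^k − η d(x^k)` with
`0 < ηγ < 1`, second-moment bound `E[‖Δ^k‖²] ≤ G₀` and bias bound
`|E[⟨∇f(x^k), Δ^k⟩]| ≤ ηG₀ + ρ^{k−1}G₀`, the average of `E[‖∇f(x^k)‖²]`
over `k = 1, …, N` is bounded by
`(f(x¹) − f*)/(Nη(1 − ηγ/2)) + ηG₀ + G₀/((1−ρ)N) + ηγG₀/(2 − ηγ)`. -/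
theorem biased_sgd_averaged_gradient_bound {n : ℕ} {Ω : Type*} [MeasureSpace Ω]
    (μ : Measure Ω) [IsProbabilityMeasure μ]
    (f : EuclideanSpace ℝ (Fin n) → ℝ)
    (f' : EuclideanSpace ℝ (Fin n) → EuclideanSpace ℝ (Fin n))
    (hdiff : ∀ z, HasGradientAt f (f' z) z)
    (γ : ℝ) (hγ : 0 < γ)
    (hlip : ∀ z w, ‖f' z - f' w‖ ≤ γ * ‖z - w‖)
    (fstar : ℝ) (hlb : ∀ z, fstar ≤ f z)
    (N : ℕ) (hN : 1 ≤ N)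
    (η : ℝ) (hη0 : 0 < η) (hη1 : η * γ < 1)
    (x D : ℕ → Ω → EuclideanSpace ℝ (Fin n))
    (x1 : EuclideanSpace ℝ (Fin n)) (hx1 : ∀ ω, x 1 ω = x1)
    (hupd : ∀ k, 1 ≤ k → ∀ ω, x (k + 1) ω = x k ω - η • D k ω)
    (G₀ : ℝ) (hG₀ : 0 < G₀) (ρ : ℝ) (hρ0 : 0 < ρ) (hρ1 : ρ < 1)
    (hint_f : ∀ k ∈ Icc 1 (N + 1), Integrable (fun ω => f (x k ω)) μ)
    (hint_grad : ∀ k ∈ Icc 1 N, Integrable (fun ω => ‖f' (x k ω)‖ ^ 2) μ)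
    (hint_err : ∀ k ∈ Icc 1 N,
      Integrable (fun ω => ‖D k ω - f' (x k ω)‖ ^ 2) μ)
    (hint_inner : ∀ k ∈ Icc 1 N,
      Integrable (fun ω => (inner ℝ (f' (x k ω)) (D k ω - f' (x k ω)) : ℝ)) μ)
    (hvar : ∀ k ∈ Icc 1 N, ∫ ω, ‖D k ω - f' (x k ω)‖ ^ 2 ∂μ ≤ G₀)
    (hbias : ∀ k ∈ Icc 1 N,
      |∫ ω, (inner ℝ (f' (x k ω)) (D k ω - f' (x k ω)) : ℝ) ∂μ|
        ≤ η * G₀ + ρ ^ (k - 1) * G₀) :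
    (1 / (N : ℝ)) * ∑ k ∈ Icc 1 N, ∫ ω, ‖f' (x k ω)‖ ^ 2 ∂μ
      ≤ (f x1 - fstar) / ((N : ℝ) * η * (1 - η * γ / 2))
        + η * G₀ + G₀ / ((1 - ρ) * (N : ℝ)) + η * γ * G₀ / (2 - η * γ) := by
  have hc : 0 < η * (1 - η * γ / 2) := mul_pos hη0 (by linarith)
  have step : ∀ k ∈ Icc 1 N, ∫ ω, ‖f' (x k ω)‖ ^ 2 ∂μ
      ≤ (∫ ω, f (x k ω) ∂μ - ∫ ω, f (x (k + 1) ω) ∂μ) / (η * (1 - η * γ / 2))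
        + (η * G₀ + η * γ * G₀ / (2 - η * γ)) + ρ ^ (k - 1) * G₀ := by
    intro k hk
    have hk' := mem_Icc.1 hk
    have hvar' : η * γ / (2 - η * γ) * ∫ ω, ‖D k ω - f' (x k ω)‖ ^ 2 ∂μ
        ≤ η * γ * G₀ / (2 - η * γ) := by
      rw [div_mul_eq_mul_div]
      exact div_le_div_of_nonneg_right (mul_le_mul_of_nonneg_left (hvar k hk) (by positivity))
        (by linarith)
    linarith [hbias k hk, integral_sq_norm_gradient_le_of_step hdiff hlip hγ.le hη0 hη1.le
      (hupd k hk'.1) (hint_f k (mem_Icc.2 ⟨hk'.1, by omega⟩))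
      (hint_f (k + 1) (mem_Icc.2 ⟨by omega, by omega⟩)) (hint_grad k hk) (hint_inner k hk)
      (hint_err k hk)]
  have hT : ∫ ω, f (x 1 ω) ∂μ - ∫ ω, f (x (N + 1) ω) ∂μ ≤ f x1 - fstar := by
    have hlast : fstar ≤ ∫ ω, f (x (N + 1) ω) ∂μ := by
      simpa using integral_mono (integrable_const fstar)
        (hint_f (N + 1) (mem_Icc.2 ⟨by omega, le_rfl⟩)) fun ω => hlb _
    simp only [hx1, integral_const, probReal_univ, one_smul]
    linarith
  calc _ ≤ _ := average_le_of_le_telescoping_add_geom hN hc hG₀.le hρ0.le hρ1 hT step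
    _ = _ := by ring
end
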